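/- arXiv:1704.08867 — 5 statements merged into one kernel-verified Lean document; each statement's English description precedes it below -/
import Mathlib

section
/- For all positive integers p, q, r that are pairwise distinct with q < r, the integral over (0, π) of sin²(px)·sin(qx)·sin(rx) dx equals π/8 if r + q = 2p, equals -π/8 if r - q = 2p, and equals 0 otherwise. -/
/-!
Product-to-sum turns sin²(px) sin(qx) sin(rx) into a combination of six cosines cos(kx) with
integer frequencies k = r ± q, 2p ± r ± q, and ∫₀^π cos(kx) dx is π for k = 0 and 0 otherwise.
For 0 < q < r only 2p - r - q (weight 1/8) or 2p - r + q (weight -1/8) can vanish.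
-/

open Real intervalIntegral

theorem integral_cos_int_mul_zero_pi (k : ℤ) :
    ∫ x in (0:ℝ)..π, cos (k * x) = if k = 0 then π else 0 := by
  rcases eq_or_ne k 0 with rfl | hk
  · simp
  · rw [if_neg hk, integral_comp_mul_left cos (Int.cast_ne_zero.mpr hk)]
    simp [integral_cos, sin_int_mul_pi]

theorem sin_sq_mul_sin_mul_sin (A B C : ℝ) :
    sin A ^ 2 * sin B * sin C =
      (2 * cos (C - B) - 2 * cos (C + B) - cos (2 * A + C - B) - cos (2 * A - C + B)
        + cos (2 * A + C + B) + cos (2 * A - C - B)) / 8 := by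
  simp only [sin_sq, cos_add, cos_sub, sin_add, sin_sub, cos_two_mul, sin_two_mul]
  ring

theorem integral_sin_sq_mul_sin_mul_sin_int (p q r : ℤ) :
    ∫ x in (0:ℝ)..π, sin (p * x) ^ 2 * sin (q * x) * sin (r * x) =
      ((2 * if r - q = 0 then π else 0) - (2 * if r + q = 0 then π else 0)
        - (if 2 * p + r - q = 0 then π else 0) - (if 2 * p - r + q = 0 then π else 0)
        + (if 2 * p + r + q = 0 then π else 0) + (if 2 * p - r - q = 0 then π else 0)) / 8 := by
  have expand : ∀ x : ℝ, sin (p * x) ^ 2 * sin (q * x) * sin (r * x) =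
      (2 * cos (((r - q : ℤ) : ℝ) * x) - 2 * cos (((r + q : ℤ) : ℝ) * x)
        - cos (((2 * p + r - q : ℤ) : ℝ) * x) - cos (((2 * p - r + q : ℤ) : ℝ) * x)
        + cos (((2 * p + r + q : ℤ) : ℝ) * x) + cos (((2 * p - r - q : ℤ) : ℝ) * x)) / 8 := by
    intro x
    rw [sin_sq_mul_sin_mul_sin]
    push_cast
    ring_nf
  simp (disch := exact Continuous.intervalIntegrable (by fun_prop) _ _) only [expand,
    integral_div, integral_add, integral_sub, integral_const_mul, integral_cos_int_mul_zero_pi]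

theorem sin_sq_sin_sin_integral_general (p q r : ℕ) (hq : 0 < q) (hqr : q < r) :
    ∫ x in (0:ℝ)..Real.pi,
      Real.sin ((p : ℝ) * x) ^ 2 * Real.sin ((q : ℝ) * x) * Real.sin ((r : ℝ) * x) =
      if r + q = 2 * p then Real.pi / 8
      else if r - q = 2 * p then -Real.pi / 8
      else 0 := by
  have h := integral_sin_sq_mul_sin_mul_sin_int p q r
  simp only [Int.cast_natCast] at h
  rw [h]
  split_ifs <;> first | omega | ring

theorem sin_sq_sin_sin_integral (p q r : ℕ) (hp : 0 < p) (hq : 0 < q) (hr : 0 < r)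
    (hpq : p ≠ q) (hpr : p ≠ r) (hqr : q < r) :
    ∫ x in (0:ℝ)..Real.pi,
      Real.sin ((p : ℝ) * x) ^ 2 * Real.sin ((q : ℝ) * x) * Real.sin ((r : ℝ) * x) =
      if r + q = 2 * p then Real.pi / 8
      else if r - q = 2 * p then -Real.pi / 8
      else 0 :=
  sin_sq_sin_sin_integral_general p q r hq hqr
end

section
/- For all positive integers p, q, r, s that are pairwise distinct with p < q and r < s, the integral over (0, π) of sin(px)·sin(qx)·sin(rx)·sin(sx) dx equals π/8 if q + p = s + r or q − p = s − r, equals −π/8 if q + p = s − r or q − p = s + r, and equals 0 otherwise. -/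
/-!
Writing each of `sin (p x) sin (q x)` and `sin (r x) sin (s x)` as a difference of cosines turns
the integrand into four products `cos (a x) cos (c x)` with `a ∈ {q - p, q + p}`,
`c ∈ {s - r, s + r}`, all frequencies positive. By orthogonality of the cosines on `(0, π)` each
product contributes `± π / 8` exactly when its two frequencies agree. Since `p, r > 0` and
`p ≠ r`, at most one of the four coincidences can hold.
-/

open Real intervalIntegral

lemma integral_cos_int_mul {n : ℤ} (hn : n ≠ 0) : ∫ x in (0:ℝ)..π, cos (n * x) = 0 := by
  rw [integral_comp_mul_left cos (Int.cast_ne_zero.mpr hn)]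
  simp [sin_int_mul_pi]

lemma integral_cos_nat_mul_mul_cos_nat_mul {m n : ℕ} (hm : 0 < m) :
    ∫ x in (0:ℝ)..π, cos (m * x) * cos (n * x) = if m = n then π / 2 else 0 := by
  have product_to_sum : ∀ x : ℝ, cos (m * x) * cos (n * x) =
      (cos (((m - n : ℤ) : ℝ) * x) + cos (((m + n : ℤ) : ℝ) * x)) / 2 := by
    intro x
    push_cast
    rw [sub_mul, add_mul, cos_sub, cos_add]
    ring
  simp_rw [product_to_sum]
  rw [integral_div, integral_add ((by fun_prop : Continuous _).intervalIntegrable _ _)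
    ((by fun_prop : Continuous _).intervalIntegrable _ _),
    integral_cos_int_mul (show (m + n : ℤ) ≠ 0 by omega)]
  split_ifs with hmn
  · simp [hmn]
  · rw [integral_cos_int_mul (show (m - n : ℤ) ≠ 0 by omega)]
    simp

lemma sin_nat_mul_mul_sin_nat_mul {a b : ℕ} (hab : a ≤ b) (x : ℝ) :
    sin (a * x) * sin (b * x) = (cos ((b - a : ℕ) * x) - cos ((b + a : ℕ) * x)) / 2 := by
  rw [Nat.cast_sub hab]
  push_cast
  rw [sub_mul, add_mul, cos_sub, cos_add]
  ring

lemma integral_cos_sub_cos_mul_cos_sub_cos {a b c d : ℕ} (ha : 0 < a) (hb : 0 < b) :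
    ∫ x in (0:ℝ)..π, (cos (a * x) - cos (b * x)) * (cos (c * x) - cos (d * x)) =
      π / 2 * ((if a = c then 1 else 0) - (if a = d then 1 else 0) -
        (if b = c then 1 else 0) + (if b = d then 1 else 0)) := by
  have hi : ∀ m n : ℕ,
      IntervalIntegrable (fun x => cos (m * x) * cos (n * x)) MeasureTheory.volume 0 π :=
    fun m n => (by fun_prop : Continuous _).intervalIntegrable _ _
  simp_rw [sub_mul, mul_sub]
  rw [integral_sub ((hi a c).sub (hi a d)) ((hi b c).sub (hi b d)), integral_sub (hi a c) (hi a d),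
    integral_sub (hi b c) (hi b d)]
  simp only [integral_cos_nat_mul_mul_cos_nat_mul ha, integral_cos_nat_mul_mul_cos_nat_mul hb]
  split_ifs <;> ring

theorem sin_four_product_integral_general (p q r s : ℕ) (hp : 0 < p) (hr : 0 < r)
    (hpq : p < q) (hrs : r < s)
    (h1 : p ≠ r) :
    ∫ x in (0:ℝ)..Real.pi,
      Real.sin ((p : ℝ) * x) * Real.sin ((q : ℝ) * x) *
        Real.sin ((r : ℝ) * x) * Real.sin ((s : ℝ) * x) =
      if q + p = s + r ∨ q - p = s - r then Real.pi / 8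
      else if q + p = s - r ∨ q - p = s + r then -Real.pi / 8
      else 0 := by
  have integrand : ∀ x : ℝ, sin (p * x) * sin (q * x) * sin (r * x) * sin (s * x) =
      (cos ((q - p : ℕ) * x) - cos ((q + p : ℕ) * x)) *
        (cos ((s - r : ℕ) * x) - cos ((s + r : ℕ) * x)) / 4 := by
    intro x
    rw [mul_assoc (_ * _), sin_nat_mul_mul_sin_nat_mul hpq.le, sin_nat_mul_mul_sin_nat_mul hrs.le]
    ring
  simp_rw [integrand]
  rw [integral_div, integral_cos_sub_cos_mul_cos_sub_cos (by omega) (by omega)]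
  split_ifs <;> first | omega | ring

theorem sin_four_product_integral (p q r s : ℕ) (hp : 0 < p) (hr : 0 < r)
    (hpq : p < q) (hrs : r < s)
    (h1 : p ≠ r) (h2 : p ≠ s) (h3 : q ≠ r) (h4 : q ≠ s) :
    ∫ x in (0:ℝ)..Real.pi,
      Real.sin ((p : ℝ) * x) * Real.sin ((q : ℝ) * x) *
        Real.sin ((r : ℝ) * x) * Real.sin ((s : ℝ) * x) =
      if q + p = s + r ∨ q - p = s - r then Real.pi / 8
      else if q + p = s - r ∨ q - p = s + r then -Real.pi / 8
      else 0 :=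
  sin_four_product_integral_general p q r s hp hr hpq hrs h1
end

section
/- For every positive integer l and every real x, sin(lx) = sin(x) · Σ_{i=0}^{⌊(l−1)/2⌋} (−1)^i · C(l−i−1, i) · 2^{l−2i−1} · cos^{l−2i−1}(x), where C(·,·) denotes a binomial coefficient. -/
open Finset Polynomial

/-!
Mathlib's Vieta–Fibonacci polynomials `S n` satisfy `S n (2 cos x) * sin x = sin ((n + 1) x)`.
The sum in the theorem is the explicit expansion of `S n` evaluated at `2 cos x`; the expansion
satisfies the recurrence `S (n + 2) = X * S (n + 1) - S n` termwise, by Pascal's rule.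
-/

namespace Polynomial.Chebyshev

variable {R : Type*} [CommRing R]

theorem S_summand_add_two (n i : ℕ) :
    (-1 : R[X]) ^ (i + 1) * ((n + 2 - (i + 1)).choose (i + 1) : R[X]) * X ^ (n + 2 - 2 * (i + 1)) =
      X * ((-1) ^ (i + 1) * ((n + 1 - (i + 1)).choose (i + 1) : R[X]) *
          X ^ (n + 1 - 2 * (i + 1))) -
        (-1) ^ i * ((n - i).choose i : R[X]) * X ^ (n - 2 * i) := by
  obtain h | rfl | h := lt_trichotomy n (2 * i)
  · rw [Nat.choose_eq_zero_of_lt (show n + 2 - (i + 1) < i + 1 by omega),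
      Nat.choose_eq_zero_of_lt (show n + 1 - (i + 1) < i + 1 by omega),
      Nat.choose_eq_zero_of_lt (show n - i < i by omega)]
    simp
  · rw [show 2 * i + 2 - (i + 1) = i + 1 by omega, show 2 * i + 1 - (i + 1) = i by omega,
      show 2 * i - i = i by omega, show 2 * i + 2 - 2 * (i + 1) = 0 by omega]
    simp [pow_succ]
  · obtain ⟨j, rfl⟩ := Nat.exists_eq_add_of_lt h
    rw [show 2 * i + j + 1 + 2 - (i + 1) = i + j + 1 + 1 by omega, Nat.choose_succ_succ,
      show 2 * i + j + 1 + 1 - (i + 1) = i + j + 1 by omega,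
      show 2 * i + j + 1 - i = i + j + 1 by omega,
      show 2 * i + j + 1 + 2 - 2 * (i + 1) = j + 1 by omega,
      show 2 * i + j + 1 + 1 - 2 * (i + 1) = j by omega,
      show 2 * i + j + 1 - 2 * i = j + 1 by omega]
    push_cast
    ring

/-- The binomial coefficients vanish for `i > n / 2`, so any range `N > n / 2` will do; this
lets the three sums in the recurrence share one range. -/
theorem S_natCast_eq_sum_range (n N : ℕ) (hN : n / 2 < N) :
    S R n = ∑ i ∈ range N, (-1 : R[X]) ^ i * ((n - i).choose i : R[X]) * X ^ (n - 2 * i) := by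
  induction n using Nat.twoStepInduction generalizing N with
  | zero => obtain ⟨M, rfl⟩ := Nat.exists_eq_add_of_lt hN; simp [sum_range_succ']
  | one => obtain ⟨M, rfl⟩ := Nat.exists_eq_add_of_lt hN; simp [sum_range_succ']
  | more n ihn ihn1 =>
    obtain ⟨M, rfl⟩ : ∃ M, N = M + 1 := ⟨N - 1, by omega⟩
    rw [Nat.cast_add, Nat.cast_two, S_add_two, ← Nat.cast_add_one, ihn1 (M + 1) (by omega),
      ihn M (by omega), sum_range_succ', sum_range_succ' _ M,
      sum_congr rfl fun i _ => S_summand_add_two n i, sum_sub_distrib, ← mul_sum]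
    simp only [pow_zero, Nat.choose_zero_right, Nat.cast_one, one_mul, Nat.sub_zero, mul_zero]
    ring

end Polynomial.Chebyshev

theorem sin_multiple_angle_formula (l : ℕ) (hl : 0 < l) (x : ℝ) :
    Real.sin ((l : ℝ) * x) =
      Real.sin x *
        ∑ i ∈ Finset.range ((l - 1) / 2 + 1),
          (-1 : ℝ) ^ i * (Nat.choose (l - i - 1) i : ℝ) * 2 ^ (l - 2 * i - 1) *
            Real.cos x ^ (l - 2 * i - 1) := by
  obtain ⟨n, rfl⟩ : ∃ n, l = n + 1 := ⟨l - 1, by omega⟩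
  have hsin := Polynomial.Chebyshev.S_two_mul_real_cos x n
  rw [Polynomial.Chebyshev.S_natCast_eq_sum_range n ((n + 1 - 1) / 2 + 1) (by omega),
    eval_finsetSum] at hsin
  push_cast at hsin ⊢
  rw [← hsin, mul_comm]
  refine congrArg _ (sum_congr rfl fun i _ => ?_)
  simp only [eval_mul, eval_pow, eval_neg, eval_one, eval_natCast, eval_X, add_tsub_cancel_right,
    Nat.sub_right_comm _ i 1, Nat.sub_right_comm _ (2 * i) 1]
  ring
end

section
/- Let μ = 3 and define φ₁: ℝ → ℝ by φ₁(t) = (1/2)·sin(2t) for 0 ≤ t ≤ π/2, φ₁(t) = sin(π/2 − t) for π/2 ≤ t ≤ 3π/2, extended (3π/2)-periodically to all of ℝ. Then φ₁ is of class C² on ℝ and satisfies φ₁''(t) + φ₁(t) + 3·φ₁(t)⁺ = 0 for all t ∈ ℝ, with φ₁(0) = 0 and φ₁'(0) = 1. -/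
open Real Set

noncomputable def aosT : ℝ := 3 * Real.pi / 2

lemma aosT_pos : 0 < aosT := by
  have := Real.pi_pos; unfold aosT; linarith

noncomputable def sfrac (t : ℝ) : ℝ := t - ⌊t / aosT⌋ * aosT

lemma sfrac_mem (t : ℝ) : sfrac t ∈ Ico 0 aosT :=
  ⟨Int.sub_floor_div_mul_nonneg t aosT_pos, Int.sub_floor_div_mul_lt t aosT_pos⟩

lemma sfrac_eq_self {t : ℝ} (h : t ∈ Ico 0 aosT) : sfrac t = t := by
  have h0 : (0:ℝ) ≤ t / aosT := div_nonneg h.1 aosT_pos.le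
  have h1 : t / aosT < 1 := (div_lt_one aosT_pos).2 h.2
  have : ⌊t / aosT⌋ = 0 := Int.floor_eq_zero_iff.2 ⟨h0, h1⟩
  simp [sfrac, this]

lemma sfrac_periodic : Function.Periodic sfrac aosT := by
  intro t
  have h : (t + aosT) / aosT = t / aosT + 1 := by
    rw [add_div, div_self aosT_pos.ne']
  unfold sfrac
  rw [h, Int.floor_add_one]
  push_cast
  ring

/-- glue a piecewise derivative -/
lemma glue_hasDerivAt {F f g : ℝ → ℝ} {a d ε : ℝ} (hε : 0 < ε)
    (hl : ∀ u, a - ε < u → u ≤ a → F u = f u)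
    (hr : ∀ u, a ≤ u → u < a + ε → F u = g u)
    (hf : HasDerivAt f d a) (hg : HasDerivAt g d a) : HasDerivAt F d a := by
  have hFa : F a = f a := hl a (by linarith) le_rfl
  have hFa' : F a = g a := hr a le_rfl (by linarith)
  have hIic : HasDerivWithinAt F d (Iic a) a := by
    refine (hf.hasDerivWithinAt).congr_of_eventuallyEq ?_ hFa
    have h1 : Ioi (a - ε) ∈ nhdsWithin a (Iic a) :=
      nhdsWithin_le_nhds (Ioi_mem_nhds (by linarith))
    filter_upwards [h1, self_mem_nhdsWithin] with u hu1 hu2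
    exact hl u hu1 hu2
  have hIci : HasDerivWithinAt F d (Ici a) a := by
    refine (hg.hasDerivWithinAt).congr_of_eventuallyEq ?_ hFa'
    have h1 : Iio (a + ε) ∈ nhdsWithin a (Ici a) :=
      nhdsWithin_le_nhds (Iio_mem_nhds (by linarith))
    filter_upwards [h1, self_mem_nhdsWithin] with u hu1 hu2
    exact hr u hu2 hu1
  have := hIic.union hIci
  rw [Iic_union_Ici] at this
  exact hasDerivWithinAt_univ.1 this

/-- transport HasDerivAt along periodicity -/
lemma periodic_hasDerivAt {F G : ℝ → ℝ} (hF : Function.Periodic F aosT)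
    (hG : Function.Periodic G aosT)
    (base : ∀ s ∈ Ico 0 aosT, HasDerivAt F (G s) s) :
    ∀ t, HasDerivAt F (G t) t := by
  intro t
  set k : ℤ := ⌊t / aosT⌋ with hk
  have hs : sfrac t ∈ Ico 0 aosT := sfrac_mem t
  have ht : t = sfrac t + k * aosT := by unfold sfrac; ring
  have hsub : t - (k:ℝ) * aosT = sfrac t := by unfold sfrac; rw [hk]
  have hGt : G t = G (sfrac t) := by
    rw [← hsub]; exact (hG.sub_int_mul_eq k).symm
  have hFeq : F = fun u => F (u - k * aosT) := by
    funext u; exact (hF.sub_int_mul_eq k).symm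
  rw [hGt, hFeq]
  have hinner : HasDerivAt (fun u : ℝ => u - k * aosT) 1 t := by
    simpa using (hasDerivAt_id t).sub_const (k * aosT)
  have houter : HasDerivAt F (G (sfrac t)) (t - k * aosT) := by
    rw [hsub]; exact base _ hs
  have := HasDerivAt.comp t houter hinner
  simpa [Function.comp_def] using this

noncomputable def Phi (t : ℝ) : ℝ :=
  if sfrac t ≤ Real.pi / 2 then (1/2) * Real.sin (2 * sfrac t) else Real.cos (sfrac t)

noncomputable def D1 (t : ℝ) : ℝ :=
  if sfrac t ≤ Real.pi / 2 then Real.cos (2 * sfrac t) else -Real.sin (sfrac t)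

noncomputable def D2 (t : ℝ) : ℝ :=
  if sfrac t ≤ Real.pi / 2 then -2 * Real.sin (2 * sfrac t) else -Real.cos (sfrac t)

lemma Phi_periodic : Function.Periodic Phi aosT := fun t => by
  unfold Phi; rw [sfrac_periodic t]
lemma D1_periodic : Function.Periodic D1 aosT := fun t => by
  unfold D1; rw [sfrac_periodic t]
lemma D2_periodic : Function.Periodic D2 aosT := fun t => by
  unfold D2; rw [sfrac_periodic t]

lemma Phi_base {t : ℝ} (h : t ∈ Ico 0 aosT) :
    Phi t = if t ≤ Real.pi / 2 then (1/2) * Real.sin (2 * t) else Real.cos t := by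
  unfold Phi; rw [sfrac_eq_self h]
lemma D1_base {t : ℝ} (h : t ∈ Ico 0 aosT) :
    D1 t = if t ≤ Real.pi / 2 then Real.cos (2 * t) else -Real.sin t := by
  unfold D1; rw [sfrac_eq_self h]
lemma D2_base {t : ℝ} (h : t ∈ Ico 0 aosT) :
    D2 t = if t ≤ Real.pi / 2 then -2 * Real.sin (2 * t) else -Real.cos t := by
  unfold D2; rw [sfrac_eq_self h]

lemma sin_3pi2 : Real.sin aosT = -1 := by
  have h : aosT = Real.pi + Real.pi / 2 := by unfold aosT; ring
  rw [h, Real.sin_add]; simp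
lemma cos_3pi2 : Real.cos aosT = 0 := by
  have h : aosT = Real.pi + Real.pi / 2 := by unfold aosT; ring
  rw [h, Real.cos_add]; simp

lemma pi2_lt_T : Real.pi / 2 < aosT := by have := Real.pi_pos; unfold aosT; linarith

lemma hasDerivAt_half_sin_two (a : ℝ) :
    HasDerivAt (fun u : ℝ => (1/2) * Real.sin (2 * u)) (Real.cos (2 * a)) a := by
  have h1 : HasDerivAt (fun u : ℝ => 2 * u) 2 a := by
    simpa using (hasDerivAt_id a).const_mul 2
  have := ((Real.hasDerivAt_sin (2 * a)).comp a h1).const_mul (1/2)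
  simpa using this.congr_deriv (by ring)

lemma hasDerivAt_cos_shift (a c : ℝ) :
    HasDerivAt (fun u : ℝ => Real.cos (u + c)) (-Real.sin (a + c)) a := by
  have h1 : HasDerivAt (fun u : ℝ => u + c) 1 a := (hasDerivAt_id a).add_const c
  simpa [Function.comp_def] using (Real.hasDerivAt_cos (a + c)).comp a h1

lemma hasDerivAt_neg_sin_shift (a c : ℝ) :
    HasDerivAt (fun u : ℝ => -Real.sin (u + c)) (-Real.cos (a + c)) a := by
  have h1 : HasDerivAt (fun u : ℝ => u + c) 1 a := (hasDerivAt_id a).add_const c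
  simpa [Function.comp_def, Pi.neg_def] using ((Real.hasDerivAt_sin (a + c)).comp a h1).neg

lemma hasDerivAt_cos_two (a : ℝ) :
    HasDerivAt (fun u : ℝ => Real.cos (2 * u)) (-2 * Real.sin (2 * a)) a := by
  have h1 : HasDerivAt (fun u : ℝ => 2 * u) 2 a := by
    simpa using (hasDerivAt_id a).const_mul 2
  simpa [Function.comp_def] using ((Real.hasDerivAt_cos (2 * a)).comp a h1).congr_deriv (by ring)

lemma Phi_left {u : ℝ} (h1 : -(Real.pi/2) < u) (h2 : u < 0) :
    Phi u = Real.cos (u + aosT) := by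
  have := Real.pi_pos
  have hmem : u + aosT ∈ Ico 0 aosT := by
    constructor
    · unfold aosT; linarith
    · linarith
  rw [← Phi_periodic u, Phi_base hmem, if_neg]
  unfold aosT; push_neg; linarith

lemma D1_left {u : ℝ} (h1 : -(Real.pi/2) < u) (h2 : u < 0) :
    D1 u = -Real.sin (u + aosT) := by
  have := Real.pi_pos
  have hmem : u + aosT ∈ Ico 0 aosT := by
    constructor
    · unfold aosT; linarith
    · linarith
  rw [← D1_periodic u, D1_base hmem, if_neg]
  unfold aosT; push_neg; linarith

lemma Phi_base_pos {u : ℝ} (h1 : 0 ≤ u) (h2 : u ≤ Real.pi/2) :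
    Phi u = (1/2) * Real.sin (2 * u) := by
  have := Real.pi_pos
  rw [Phi_base ⟨h1, lt_of_le_of_lt h2 pi2_lt_T⟩, if_pos h2]

lemma Phi_base_neg {u : ℝ} (h1 : Real.pi/2 ≤ u) (h2 : u < aosT) :
    Phi u = Real.cos u := by
  have := Real.pi_pos
  rcases eq_or_lt_of_le h1 with h | h
  · rw [Phi_base ⟨by linarith, h2⟩, if_pos (le_of_eq h.symm), ← h]
    rw [show 2 * (Real.pi/2) = Real.pi by ring]
    simp
  · rw [Phi_base ⟨by linarith, h2⟩, if_neg (not_le.2 h)]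

lemma D1_base_pos {u : ℝ} (h1 : 0 ≤ u) (h2 : u ≤ Real.pi/2) :
    D1 u = Real.cos (2 * u) := by
  rw [D1_base ⟨h1, lt_of_le_of_lt h2 pi2_lt_T⟩, if_pos h2]

lemma D1_base_neg {u : ℝ} (h1 : Real.pi/2 ≤ u) (h2 : u < aosT) :
    D1 u = -Real.sin u := by
  have := Real.pi_pos
  rcases eq_or_lt_of_le h1 with h | h
  · rw [D1_base ⟨by linarith, h2⟩, if_pos (le_of_eq h.symm), ← h]
    rw [show 2 * (Real.pi/2) = Real.pi by ring]
    simp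
  · rw [D1_base ⟨by linarith, h2⟩, if_neg (not_le.2 h)]

lemma D2_base_pos {u : ℝ} (h1 : 0 ≤ u) (h2 : u ≤ Real.pi/2) :
    D2 u = -2 * Real.sin (2 * u) := by
  rw [D2_base ⟨h1, lt_of_le_of_lt h2 pi2_lt_T⟩, if_pos h2]

lemma D2_base_neg {u : ℝ} (h1 : Real.pi/2 ≤ u) (h2 : u < aosT) :
    D2 u = -Real.cos u := by
  have := Real.pi_pos
  rcases eq_or_lt_of_le h1 with h | h
  · rw [D2_base ⟨by linarith, h2⟩, if_pos (le_of_eq h.symm), ← h]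
    rw [show 2 * (Real.pi/2) = Real.pi by ring]
    simp
  · rw [D2_base ⟨by linarith, h2⟩, if_neg (not_le.2 h)]

lemma D2_left {u : ℝ} (h1 : -(Real.pi/2) < u) (h2 : u < 0) :
    D2 u = -Real.cos (u + aosT) := by
  have := Real.pi_pos
  have hmem : u + aosT ∈ Ico 0 aosT := by
    constructor
    · unfold aosT; linarith
    · linarith
  rw [← D2_periodic u, D2_base hmem, if_neg]
  unfold aosT; push_neg; linarith

lemma Phi_deriv_base {s : ℝ} (hs : s ∈ Ico 0 aosT) : HasDerivAt Phi (D1 s) s := by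
  have hπ := Real.pi_pos
  have hπT : Real.pi < aosT := by unfold aosT; linarith
  rcases eq_or_lt_of_le hs.1 with h0 | h0
  · -- s = 0
    obtain rfl : s = 0 := h0.symm
    rw [D1_base_pos le_rfl (by linarith)]
    refine glue_hasDerivAt (f := fun u => Real.cos (u + aosT))
      (g := fun u => (1/2) * Real.sin (2 * u)) (ε := Real.pi/2) (by linarith) ?_ ?_ ?_ ?_
    · intro u hu1 hu2
      rcases eq_or_lt_of_le hu2 with h | h
      · subst h
        rw [Phi_base_pos le_rfl (by linarith)]
        simp [cos_3pi2]
      · exact Phi_left (by linarith) h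
    · intro u hu1 hu2
      exact Phi_base_pos hu1 (by linarith)
    · have := hasDerivAt_cos_shift 0 aosT
      rw [zero_add, sin_3pi2] at this
      convert this using 1
      norm_num
    · exact hasDerivAt_half_sin_two 0
  rcases lt_trichotomy s (Real.pi/2) with h1 | h1 | h1
  · -- 0 < s < π/2
    rw [D1_base_pos h0.le h1.le]
    refine (hasDerivAt_half_sin_two s).congr_of_eventuallyEq ?_
    filter_upwards [isOpen_Ioo.mem_nhds (show s ∈ Ioo 0 (Real.pi/2) from ⟨h0, h1⟩)] with u hu
    exact Phi_base_pos hu.1.le hu.2.le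
  · -- s = π/2
    subst h1
    rw [D1_base_pos (by linarith) le_rfl]
    refine glue_hasDerivAt (f := fun u => (1/2) * Real.sin (2 * u))
      (g := Real.cos) (ε := Real.pi/2) (by linarith) ?_ ?_ ?_ ?_
    · intro u hu1 hu2
      exact Phi_base_pos (by linarith) hu2
    · intro u hu1 hu2
      exact Phi_base_neg hu1 (by unfold aosT; linarith)
    · exact hasDerivAt_half_sin_two _
    · have := Real.hasDerivAt_cos (Real.pi/2)
      convert this using 1
      rw [show 2 * (Real.pi/2) = Real.pi by ring]
      simp
  · -- π/2 < s < T
    rw [D1_base_neg h1.le hs.2]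
    refine (Real.hasDerivAt_cos s).congr_of_eventuallyEq ?_
    filter_upwards [isOpen_Ioo.mem_nhds (show s ∈ Ioo (Real.pi/2) aosT from ⟨h1, hs.2⟩)] with u hu
    exact Phi_base_neg hu.1.le hu.2

lemma D1_deriv_base {s : ℝ} (hs : s ∈ Ico 0 aosT) : HasDerivAt D1 (D2 s) s := by
  have hπ := Real.pi_pos
  have hπT : Real.pi < aosT := by unfold aosT; linarith
  rcases eq_or_lt_of_le hs.1 with h0 | h0
  · -- s = 0
    obtain rfl : s = 0 := h0.symm
    rw [D2_base_pos le_rfl (by linarith)]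
    refine glue_hasDerivAt (f := fun u => -Real.sin (u + aosT))
      (g := fun u => Real.cos (2 * u)) (ε := Real.pi/2) (by linarith) ?_ ?_ ?_ ?_
    · intro u hu1 hu2
      rcases eq_or_lt_of_le hu2 with h | h
      · subst h
        rw [D1_base_pos le_rfl (by linarith)]
        simp [sin_3pi2]
      · exact D1_left (by linarith) h
    · intro u hu1 hu2
      exact D1_base_pos hu1 (by linarith)
    · have := hasDerivAt_neg_sin_shift 0 aosT
      rw [zero_add, cos_3pi2] at this
      convert this using 1
      norm_num
    · exact hasDerivAt_cos_two 0
  rcases lt_trichotomy s (Real.pi/2) with h1 | h1 | h1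
  · -- 0 < s < π/2
    rw [D2_base_pos h0.le h1.le]
    refine (hasDerivAt_cos_two s).congr_of_eventuallyEq ?_
    filter_upwards [isOpen_Ioo.mem_nhds (show s ∈ Ioo 0 (Real.pi/2) from ⟨h0, h1⟩)] with u hu
    exact D1_base_pos hu.1.le hu.2.le
  · -- s = π/2
    subst h1
    rw [D2_base_pos (by linarith) le_rfl]
    refine glue_hasDerivAt (f := fun u => Real.cos (2 * u))
      (g := fun u => -Real.sin u) (ε := Real.pi/2) (by linarith) ?_ ?_ ?_ ?_
    · intro u hu1 hu2
      exact D1_base_pos (by linarith) hu2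
    · intro u hu1 hu2
      exact D1_base_neg hu1 (by unfold aosT; linarith)
    · exact hasDerivAt_cos_two _
    · have : HasDerivAt (fun u => -Real.sin u) _ _ := (Real.hasDerivAt_sin (Real.pi/2)).neg
      convert this using 1
      rw [show 2 * (Real.pi/2) = Real.pi by ring]
      simp
  · -- π/2 < s < T
    rw [D2_base_neg h1.le hs.2]
    refine ((Real.hasDerivAt_sin s).neg).congr_of_eventuallyEq ?_
    filter_upwards [isOpen_Ioo.mem_nhds (show s ∈ Ioo (Real.pi/2) aosT from ⟨h1, hs.2⟩)] with u hu
    exact D1_base_neg hu.1.le hu.2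

lemma Phi_hasDerivAt (t : ℝ) : HasDerivAt Phi (D1 t) t :=
  periodic_hasDerivAt Phi_periodic D1_periodic (fun _ hs => Phi_deriv_base hs) t

lemma D1_hasDerivAt (t : ℝ) : HasDerivAt D1 (D2 t) t :=
  periodic_hasDerivAt D1_periodic D2_periodic (fun _ hs => D1_deriv_base hs) t

lemma deriv_Phi : deriv Phi = D1 := funext fun t => (Phi_hasDerivAt t).deriv
lemma deriv_D1 : deriv D1 = D2 := funext fun t => (D1_hasDerivAt t).deriv

lemma eq_sfrac {G : ℝ → ℝ} (hG : Function.Periodic G aosT) (t : ℝ) :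
    G t = G (sfrac t) := by
  have hsub : t - (⌊t / aosT⌋ : ℝ) * aosT = sfrac t := rfl
  rw [← hsub]
  exact (hG.sub_int_mul_eq _).symm

lemma ode (t : ℝ) : D2 t + Phi t + 3 * max (Phi t) 0 = 0 := by
  have hπ := Real.pi_pos
  rw [eq_sfrac D2_periodic, eq_sfrac Phi_periodic]
  set s := sfrac t with hs
  have hmem := sfrac_mem t
  by_cases h : s ≤ Real.pi / 2
  · rw [Phi_base_pos hmem.1 h, D2_base_pos hmem.1 h]
    have hpos : 0 ≤ (1/2) * Real.sin (2 * s) := by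
      have : 0 ≤ Real.sin (2 * s) :=
        Real.sin_nonneg_of_nonneg_of_le_pi (by linarith [hmem.1]) (by linarith)
      linarith
    rw [max_eq_left hpos]
    ring
  · push_neg at h
    rw [Phi_base_neg h.le hmem.2, D2_base_neg h.le hmem.2]
    have hneg : Real.cos s ≤ 0 := by
      apply Real.cos_nonpos_of_pi_div_two_le_of_le h.le
      have := hmem.2
      unfold aosT at this
      linarith
    rw [max_eq_right hneg]
    ring

lemma Phi_continuous : Continuous Phi :=
  continuous_iff_continuousAt.2 fun t => (Phi_hasDerivAt t).continuousAt

lemma D2_continuous : Continuous D2 := by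
  have h : D2 = fun t => -(Phi t + 3 * max (Phi t) 0) := by
    funext t
    have := ode t
    linarith
  rw [h]
  exact (Phi_continuous.add (continuous_const.mul
    (Phi_continuous.max continuous_const))).neg

theorem explicit_solution_asymmetric_oscillator (φ : ℝ → ℝ)
    (hper : ∀ t : ℝ, φ (t + 3 * Real.pi / 2) = φ t)
    (h1 : ∀ t ∈ Set.Icc (0:ℝ) (Real.pi / 2), φ t = (1 / 2) * Real.sin (2 * t))
    (h2 : ∀ t ∈ Set.Icc (Real.pi / 2) (3 * Real.pi / 2),
      φ t = Real.sin (Real.pi / 2 - t)) :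
    ContDiff ℝ 2 φ ∧
    (∀ t : ℝ, deriv (deriv φ) t + φ t + 3 * max (φ t) 0 = 0) ∧
    φ 0 = 0 ∧ deriv φ 0 = 1 := by
  have hπ := Real.pi_pos
  have hperP : Function.Periodic φ aosT := hper
  have hφ : φ = Phi := by
    funext t
    rw [eq_sfrac hperP t, eq_sfrac Phi_periodic t]
    set s := sfrac t with hs
    have hmem := sfrac_mem t
    by_cases h : s ≤ Real.pi / 2
    · rw [Phi_base_pos hmem.1 h]
      exact h1 s ⟨hmem.1, h⟩
    · push_neg at h
      rw [Phi_base_neg h.le hmem.2]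
      rw [h2 s ⟨h.le, by have := hmem.2; unfold aosT at this; linarith⟩]
      exact Real.sin_pi_div_two_sub s
  subst hφ
  refine ⟨?_, ?_, ?_, ?_⟩
  · have h2' : (2 : WithTop ℕ∞) = 1 + 1 := by norm_num
    have h1' : (1 : WithTop ℕ∞) = 0 + 1 := by norm_num
    rw [h2', contDiff_succ_iff_deriv]
    refine ⟨fun t => (Phi_hasDerivAt t).differentiableAt, by simp, ?_⟩
    rw [deriv_Phi, h1', contDiff_succ_iff_deriv]
    refine ⟨fun t => (D1_hasDerivAt t).differentiableAt, by simp, ?_⟩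
    rw [deriv_D1, contDiff_zero]
    exact D2_continuous
  · intro t
    rw [deriv_Phi, deriv_D1]
    exact ode t
  · rw [Phi_base_pos le_rfl (by linarith)]
    simp
  · rw [deriv_Phi, D1_base_pos le_rfl (by linarith)]
    simp
end

section
/- For every u ∈ H²(0, π) ∩ H¹₀(0, π), one has ‖u‖_{L^∞(0,π)} ≤ ‖u''‖_{L²(0,π)}. -/
/-!
With `G x` the Dirichlet Green's function of `-d²/dt²` on `[a, b]`, integrating by parts on
`[a, x]` and on `[x, b]` gives `u x = -∫ G x t * u'' t` whenever `u` vanishes at both ends.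
Cauchy–Schwarz then bounds `u x ^ 2` by `‖G x‖₂² * ‖u''‖₂²`, and
`‖G x‖₂² = (x - a)² (b - x)² / (3 (b - a))` is at most `(b - a)³ / 48`, which is below `1` on
`[0, π]`.
-/

open intervalIntegral MeasureTheory Set Real

theorem sq_integral_mul_le_integral_sq_mul_integral_sq {α : Type*} [MeasurableSpace α]
    {μ : Measure α} {f g : α → ℝ} (hf : Integrable (fun t => f t ^ 2) μ)
    (hg : Integrable (fun t => g t ^ 2) μ) (hfg : Integrable (fun t => f t * g t) μ) :
    (∫ t, f t * g t ∂μ) ^ 2 ≤ (∫ t, f t ^ 2 ∂μ) * ∫ t, g t ^ 2 ∂μ := by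
  have quadratic_nonneg : ∀ s : ℝ, 0 ≤ (∫ t, g t ^ 2 ∂μ) * (s * s)
      + 2 * (∫ t, f t * g t ∂μ) * s + ∫ t, f t ^ 2 ∂μ := by
    intro s
    have expand : (fun t => (s * g t + f t) ^ 2)
        = fun t => s * s * g t ^ 2 + 2 * s * (f t * g t) + f t ^ 2 := by
      funext t; ring
    have h : 0 ≤ ∫ t, (s * g t + f t) ^ 2 ∂μ := integral_nonneg fun t => sq_nonneg _
    rw [expand, MeasureTheory.integral_add _ hf,
      MeasureTheory.integral_add (hg.const_mul _) (hfg.const_mul _),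
      MeasureTheory.integral_const_mul, MeasureTheory.integral_const_mul] at h
    · linarith
    · exact (hg.const_mul _).add (hfg.const_mul _)
  have h := discrim_le_zero quadratic_nonneg
  rw [discrim] at h
  linarith

theorem integral_sub_mul_of_hasDerivAt_of_hasDerivAt {u u' u'' : ℝ → ℝ} {c p q : ℝ}
    (hu : ∀ t ∈ uIcc p q, HasDerivAt u (u' t) t) (hu' : ∀ t ∈ uIcc p q, HasDerivAt u' (u'' t) t)
    (hu'' : IntervalIntegrable u'' volume p q) :
    ∫ t in p..q, (t - c) * u'' t = (q - c) * u' q - (p - c) * u' p - (u q - u p) := by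
  have hu'_int : IntervalIntegrable u' volume p q :=
    ContinuousOn.intervalIntegrable fun t ht => (hu' t ht).continuousAt.continuousWithinAt
  rw [integral_mul_deriv_eq_deriv_mul (u' := fun _ => 1) (fun t _ => (hasDerivAt_id' t).sub_const c)
    hu' intervalIntegrable_const hu'']
  simp only [one_mul, integral_eq_sub_of_hasDerivAt hu hu'_int]

/-- Green's function of `-d²/dt²` on `[a, b]` with Dirichlet boundary conditions. -/
noncomputable def dirichletGreen (a b x t : ℝ) : ℝ :=
  (min t x - a) * (b - max t x) / (b - a)

section dirichletGreen

variable {a b x t : ℝ}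

theorem continuous_dirichletGreen : Continuous (dirichletGreen a b x) := by
  unfold dirichletGreen
  fun_prop

theorem dirichletGreen_of_le (h : t ≤ x) :
    dirichletGreen a b x t = (b - x) / (b - a) * (t - a) := by
  rw [dirichletGreen, min_eq_left h, max_eq_right h]
  ring

theorem dirichletGreen_of_ge (h : x ≤ t) :
    dirichletGreen a b x t = -((x - a) / (b - a)) * (t - b) := by
  rw [dirichletGreen, min_eq_right h, max_eq_left h]
  ring

variable {u u' u'' : ℝ → ℝ}

theorem integral_dirichletGreen_mul (hab : a < b) (hx : x ∈ Icc a b)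
    (hu : ∀ t ∈ Icc a b, HasDerivAt u (u' t) t) (hu' : ∀ t ∈ Icc a b, HasDerivAt u' (u'' t) t)
    (hu'' : IntervalIntegrable u'' volume a b) (ha : u a = 0) (hb : u b = 0) :
    ∫ t in a..b, dirichletGreen a b x t * u'' t = -u x := by
  rw [← uIcc_of_le hab.le] at hu hu'
  have hx' : x ∈ uIcc a b := uIcc_of_le hab.le ▸ hx
  have hleft : uIcc a x ⊆ uIcc a b := uIcc_subset_uIcc left_mem_uIcc hx'
  have hright : uIcc x b ⊆ uIcc a b := uIcc_subset_uIcc hx' right_mem_uIcc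
  have hint : IntervalIntegrable (fun t => dirichletGreen a b x t * u'' t) volume a b :=
    hu''.continuousOn_mul continuous_dirichletGreen.continuousOn
  have left : ∫ t in a..x, dirichletGreen a b x t * u'' t
      = (b - x) / (b - a) * ∫ t in a..x, (t - a) * u'' t := by
    rw [← intervalIntegral.integral_const_mul]
    refine integral_congr fun t ht => ?_
    rw [dirichletGreen_of_le (uIcc_of_le hx.1 ▸ ht).2, mul_assoc]
  have right : ∫ t in x..b, dirichletGreen a b x t * u'' t
      = -((x - a) / (b - a)) * ∫ t in x..b, (t - b) * u'' t := by
    rw [← intervalIntegral.integral_const_mul]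
    refine integral_congr fun t ht => ?_
    rw [dirichletGreen_of_ge (uIcc_of_le hx.2 ▸ ht).1, mul_assoc]
  rw [← integral_add_adjacent_intervals (hint.mono_set hleft) (hint.mono_set hright), left, right,
    integral_sub_mul_of_hasDerivAt_of_hasDerivAt (fun t ht => hu t (hleft ht))
      (fun t ht => hu' t (hleft ht)) (hu''.mono_set hleft),
    integral_sub_mul_of_hasDerivAt_of_hasDerivAt (fun t ht => hu t (hright ht))
      (fun t ht => hu' t (hright ht)) (hu''.mono_set hright), ha, hb]
  field_simp [(sub_pos.2 hab).ne']
  ring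

theorem integral_dirichletGreen_sq (hab : a < b) (hx : x ∈ Icc a b) :
    ∫ t in a..b, dirichletGreen a b x t ^ 2 = (x - a) ^ 2 * (b - x) ^ 2 / (3 * (b - a)) := by
  have hint : ∀ p q, IntervalIntegrable (fun t => dirichletGreen a b x t ^ 2) volume p q :=
    fun p q => (continuous_dirichletGreen.pow 2).intervalIntegrable p q
  have left : ∫ t in a..x, dirichletGreen a b x t ^ 2
      = ((b - x) / (b - a)) ^ 2 * ∫ t in a..x, (t - a) ^ 2 := by
    rw [← intervalIntegral.integral_const_mul]
    refine integral_congr fun t ht => ?_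
    rw [dirichletGreen_of_le (uIcc_of_le hx.1 ▸ ht).2, mul_pow]
  have right : ∫ t in x..b, dirichletGreen a b x t ^ 2
      = ((x - a) / (b - a)) ^ 2 * ∫ t in x..b, (t - b) ^ 2 := by
    rw [← intervalIntegral.integral_const_mul]
    refine integral_congr fun t ht => ?_
    rw [dirichletGreen_of_ge (uIcc_of_le hx.2 ▸ ht).1, mul_pow, neg_sq]
  rw [← integral_add_adjacent_intervals (hint a x) (hint x b), left, right,
    integral_comp_sub_right (· ^ 2), integral_comp_sub_right (· ^ 2), integral_pow, integral_pow]
  field_simp [(sub_pos.2 hab).ne']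
  ring

theorem integral_dirichletGreen_sq_le (hab : a < b) (hx : x ∈ Icc a b) :
    ∫ t in a..b, dirichletGreen a b x t ^ 2 ≤ (b - a) ^ 3 / 48 := by
  have amgm : (x - a) * (b - x) ≤ (b - a) ^ 2 / 4 := by nlinarith [sq_nonneg (2 * x - a - b)]
  have hprod : 0 ≤ (x - a) * (b - x) := mul_nonneg (sub_nonneg.2 hx.1) (sub_nonneg.2 hx.2)
  rw [integral_dirichletGreen_sq hab hx, div_le_div_iff₀ (by positivity) (by norm_num),
    ← mul_pow]
  nlinarith [mul_le_mul amgm amgm hprod (by positivity)]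

theorem sq_le_mul_integral_sq_of_hasDerivAt (hab : a < b) (hx : x ∈ Icc a b)
    (hu : ∀ t ∈ Icc a b, HasDerivAt u (u' t) t) (hu' : ∀ t ∈ Icc a b, HasDerivAt u' (u'' t) t)
    (hu'' : ContinuousOn u'' (Icc a b)) (ha : u a = 0) (hb : u b = 0) :
    u x ^ 2 ≤ (b - a) ^ 3 / 48 * ∫ t in a..b, u'' t ^ 2 := by
  have hG : ContinuousOn (dirichletGreen a b x) (Icc a b) := continuous_dirichletGreen.continuousOn
  have cauchy_schwarz : (∫ t in a..b, dirichletGreen a b x t * u'' t) ^ 2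
      ≤ (∫ t in a..b, dirichletGreen a b x t ^ 2) * ∫ t in a..b, u'' t ^ 2 := by
    simp only [integral_of_le hab.le]
    exact sq_integral_mul_le_integral_sq_mul_integral_sq
      ((hG.pow 2).intervalIntegrable_of_Icc hab.le).1
      ((hu''.pow 2).intervalIntegrable_of_Icc hab.le).1
      ((hG.mul hu'').intervalIntegrable_of_Icc hab.le).1
  rw [← neg_sq, ← integral_dirichletGreen_mul hab hx hu hu'
    (hu''.intervalIntegrable_of_Icc hab.le) ha hb]
  exact cauchy_schwarz.trans (mul_le_mul_of_nonneg_right (integral_dirichletGreen_sq_le hab hx)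
    (integral_nonneg hab.le fun t _ => sq_nonneg _))

end dirichletGreen

theorem sup_norm_le_L2_norm_second_deriv (u : ℝ → ℝ)
    (hu : ContDiff ℝ 2 u) (h0 : u 0 = 0) (hπ : u Real.pi = 0) :
    ∀ x ∈ Set.Icc (0:ℝ) Real.pi,
      |u x| ≤ Real.sqrt (∫ x in (0:ℝ)..Real.pi, (deriv (deriv u) x) ^ 2) := by
  intro x hx
  obtain ⟨hu_diff, -, hu_C1⟩ := (contDiff_succ_iff_deriv (n := 1)).1 hu
  obtain ⟨hu'_diff, hu''_cont⟩ := contDiff_one_iff_deriv.1 hu_C1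
  have hbound := sq_le_mul_integral_sq_of_hasDerivAt pi_pos hx (fun t _ => (hu_diff t).hasDerivAt)
    (fun t _ => (hu'_diff t).hasDerivAt) hu''_cont.continuousOn h0 hπ
  have hpi : (π - 0) ^ 3 / 48 ≤ 1 := by
    rw [sub_zero, div_le_one (by norm_num)]
    calc π ^ 3 ≤ 3.15 ^ 3 := pow_le_pow_left₀ pi_pos.le pi_lt_d2.le 3
      _ ≤ 48 := by norm_num
  refine abs_le_sqrt (hbound.trans ?_)
  simpa using mul_le_mul_of_nonneg_right hpi
    (integral_nonneg pi_pos.le fun t _ => sq_nonneg (deriv (deriv u) t))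
end
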